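/- arXiv:1301.0078 — 2 statements merged into one kernel-verified Lean document; each statement's English description precedes it below -/
import Mathlib

section
/- With D defined from a reciprocity function f via continued fractions as D(p,q) := f(p₁,q₁)^{-1}⋯f(pₙ,qₙ)^{-1}, the function D is a generalized Dedekind symbol with reciprocity function f: it satisfies D(p,q)=D(p,q+p), D(p,-q)=D(-p,q), and D(p,q)·D(q,-p)^{-1}=f(p,q). -/
/-- The pair `(Q⁽ⁿ⁾, P⁽ⁿ⁾)` of Manin's recursion on a list `[a₀,…,aₙ]` of integers:
`QP [] = (1,0)` and `QP (a₀ :: l) = (a₀ * Q(l) - P(l), Q(l))`, so `QP [a] = (a,1)`. -/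
def QP : List ℤ → ℤ × ℤ
  | [] => (1, 0)
  | a :: l => (a * (QP l).1 - (QP l).2, (QP l).1)

/-- Fukuhara's product: for `q/p = ⟨a₀,…,aₙ⟩` with `qᵢ = Q⁽ⁿ⁻ⁱ⁾(aᵢ,…,aₙ)`,
`pᵢ = P⁽ⁿ⁻ⁱ⁾(aᵢ,…,aₙ)`, this computes
`f(p₁,q₁)⁻¹ · f(p₂,q₂)⁻¹ ⋯ f(pₙ,qₙ)⁻¹` from the list `[a₀,…,aₙ]`. -/
def Dval {G : Type*} [Group G] (f : ℤ → ℤ → G) : List ℤ → G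
  | [] => 1
  | [_] => 1
  | _ :: b :: l => (f (QP (b :: l)).2 (QP (b :: l)).1)⁻¹ * Dval f (b :: l)

lemma QP_coprime : ∀ l : List ℤ, IsCoprime (QP l).1 (QP l).2
  | [] => isCoprime_one_left
  | a :: l => by
    have h := (QP_coprime l).symm.neg_left.add_mul_left_left a
    simp only [QP]
    have e : a * (QP l).1 - (QP l).2 = -(QP l).2 + (QP l).1 * a := by ring
    rw [e]; exact h

lemma QP_append (l : List ℤ) {t₁ t₂ : List ℤ} (h : QP t₁ = QP t₂) :
    QP (l ++ t₁) = QP (l ++ t₂) := by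
  induction l with
  | nil => simpa
  | cons a l ih => simp [QP, ih]

lemma Dval_cons {G : Type*} [Group G] (f : ℤ → ℤ → G) (x : ℤ) {l : List ℤ} (h : l ≠ []) :
    Dval f (x :: l) = (f (QP l).2 (QP l).1)⁻¹ * Dval f l := by
  cases l with
  | nil => exact absurd rfl h
  | cons b t => rfl

lemma Dval_head {G : Type*} [Group G] (f : ℤ → ℤ → G) (x y : ℤ) (l : List ℤ) :
    Dval f (x :: l) = Dval f (y :: l) := by
  cases l with
  | nil => rfl
  | cons b t => rfl

lemma QP_neg : ∀ l : List ℤ, QP (l.map (fun x => -x)) =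
    ((-1) ^ l.length * (QP l).1, (-1) ^ (l.length + 1) * (QP l).2)
  | [] => by simp [QP]
  | a :: l => by
    simp only [List.map_cons, QP, QP_neg l, List.length_cons, Prod.mk.injEq]
    constructor <;> ring

lemma Dval_neg {G : Type*} [Group G] (f : ℤ → ℤ → G)
    (h1 : ∀ p q : ℤ, IsCoprime p q → f p (-q) = f (-p) q) :
    ∀ l : List ℤ, Dval f (l.map (fun x => -x)) = Dval (fun p q => f p (-q)) l
  | [] => rfl
  | [a] => rfl
  | a :: b :: l => by
    have ih := Dval_neg f h1 (b :: l)
    have hq := QP_neg (b :: l)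
    simp only [List.map_cons] at ih hq ⊢
    rw [Dval_cons f (-a) (by simp), Dval_cons (fun p q => f p (-q)) a (by simp), ih, hq]
    congr 2
    have hc : IsCoprime (QP (b :: l)).2 (QP (b :: l)).1 := (QP_coprime (b :: l)).symm
    rcases Nat.even_or_odd (b :: l).length with he | ho
    · simp only [List.length_cons] at he ⊢
      rw [he.neg_one_pow, he.add_one.neg_one_pow, one_mul, neg_one_mul, ← h1 _ _ hc]
    · simp only [List.length_cons] at ho ⊢
      rw [ho.neg_one_pow, ho.add_one.neg_one_pow, one_mul, neg_one_mul]

lemma Dval_ext_tail {G : Type*} [Group G] (f : ℤ → ℤ → G) :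
    ∀ (l : List ℤ) {t₁ t₂ : List ℤ}, t₁ ≠ [] → t₂ ≠ [] → QP t₁ = QP t₂ →
      Dval f t₁ = Dval f t₂ → Dval f (l ++ t₁) = Dval f (l ++ t₂) := by
  intro l
  induction l with
  | nil => intro t₁ t₂ _ _ _ h; simpa using h
  | cons a l ih =>
    intro t₁ t₂ h₁ h₂ hq hd
    have n₁ : l ++ t₁ ≠ [] := by simp [h₁]
    have n₂ : l ++ t₂ ≠ [] := by simp [h₂]
    rw [List.cons_append, List.cons_append, Dval_cons f a n₁, Dval_cons f a n₂,
      QP_append l hq, ih h₁ h₂ hq hd]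


/-- If `D : W → G` is defined from a reciprocity function `f` via continued fractions,
`D(p,q) := f(p₁,q₁)⁻¹ ⋯ f(pₙ,qₙ)⁻¹` for any representation `q/p = ⟨a₀,…,aₙ⟩`, then `D`
is a generalized Dedekind symbol with reciprocity function `f`:
`D(p,q) = D(p,q+p)`, `D(p,-q) = D(-p,q)`, and `D(p,q)·D(q,-p)⁻¹ = f(p,q)`. -/
theorem Dval_dedekind_symbol {G : Type*} [Group G] (f : ℤ → ℤ → G) (D : ℤ → ℤ → G)
    (h1 : ∀ p q : ℤ, IsCoprime p q → f p (-q) = f (-p) q)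
    (h2 : ∀ p q : ℤ, IsCoprime p q → f p q * f (-q) p = 1)
    (h3 : ∀ p q : ℤ, IsCoprime p q → f p (p + q) * f (p + q) q = f p q)
    (hD : ∀ p q : ℤ, IsCoprime p q →
      ∀ l : List ℤ, l ≠ [] → (QP l).1 = q → (QP l).2 = p → D p q = Dval f l)
    (hDex : ∀ p q : ℤ, IsCoprime p q →
      ∃ l : List ℤ, l ≠ [] ∧ (QP l).1 = q ∧ (QP l).2 = p) :
    ∀ p q : ℤ, IsCoprime p q →
      D p q = D p (q + p) ∧ D p (-q) = D (-p) q ∧ D p q * (D q (-p))⁻¹ = f p q := by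
  -- f 1 (-1) = 1
  have h30 := h3 1 0 isCoprime_one_left
  rw [add_zero] at h30
  have hf11 : f 1 1 = 1 := by
    have e : f 1 1 * f 1 0 = 1 * f 1 0 := by rw [one_mul]; exact h30
    exact mul_right_cancel e
  have hfm11 : f 1 (-1) = 1 := by
    have h2' := h2 1 1 isCoprime_one_left
    rw [hf11, one_mul] at h2'
    rw [h1 1 1 isCoprime_one_left, h2']
  intro p q hpq
  obtain ⟨l, hlne, hQ, hP⟩ := hDex p q hpq
  refine ⟨?_, ?_, ?_⟩
  · -- D p q = D p (q + p)
    obtain ⟨b, t, rfl⟩ : ∃ b t, l = b :: t := by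
      cases l with
      | nil => exact absurd rfl hlne
      | cons b t => exact ⟨_, _, rfl⟩
    have hQt : (QP t).1 = p := by simpa only [QP] using hP
    have hQ' : b * (QP t).1 - (QP t).2 = q := by simpa only [QP] using hQ
    have hq1 : (QP ((b + 1) :: t)).1 = q + p := by
      simp only [QP]
      rw [hQt] at hQ' ⊢
      linarith
    have hp1 : (QP ((b + 1) :: t)).2 = p := by simpa only [QP] using hQt
    have hcop : IsCoprime p (q + p) := by simpa using hpq.add_mul_left_right 1
    rw [hD p q hpq (b :: t) (by simp) hQ hP,
      hD p (q + p) hcop ((b + 1) :: t) (by simp) hq1 hp1]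
    exact Dval_head f b (b + 1) t
  · -- D p (-q) = D (-p) q
    have key : ∀ m : List ℤ, m ≠ [] → (QP m).1 = q → (QP m).2 = p →
        (Odd m.length → D p (-q) = Dval (fun x y => f x (-y)) m) ∧
        (Even m.length → D (-p) q = Dval (fun x y => f x (-y)) m) := by
      intro m hm hq hp
      have hnegQP := QP_neg m
      constructor
      · intro hodd
        have e := hD p (-q) hpq.neg_right (m.map (fun x => -x)) (by simpa using hm)
          (by rw [hnegQP]; simp [hodd.neg_one_pow, hq])
          (by rw [hnegQP]; simp [Even.neg_one_pow hodd.add_one, hp])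
        rw [e, Dval_neg f h1 m]
      · intro heven
        have e := hD (-p) q hpq.neg_left (m.map (fun x => -x)) (by simpa using hm)
          (by rw [hnegQP]; simp [heven.neg_one_pow, hq])
          (by rw [hnegQP]; simp [Odd.neg_one_pow heven.add_one, hp])
        rw [e, Dval_neg f h1 m]
    obtain ⟨l₁, a, rfl⟩ : ∃ L b, l = L ++ [b] := by
      rcases List.eq_nil_or_concat l with h | ⟨L, b, h⟩
      · exact absurd h hlne
      · exact ⟨L, b, by simpa [List.concat_eq_append] using h⟩
    have hQPa : QP ([a] : List ℤ) = QP [a + 1, 1] := by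
      simp only [QP]
      norm_num
    have hQPB : QP (l₁ ++ [a + 1, 1]) = QP (l₁ ++ [a]) := (QP_append l₁ hQPa).symm
    have hDvAB : Dval (fun x y => f x (-y)) (l₁ ++ [a]) =
        Dval (fun x y => f x (-y)) (l₁ ++ [a + 1, 1]) := by
      refine Dval_ext_tail _ l₁ (by simp) (by simp) hQPa ?_
      simp [Dval, QP, hfm11]
    have hQB : (QP (l₁ ++ [a + 1, 1])).1 = q := by rw [hQPB]; exact hQ
    have hPB : (QP (l₁ ++ [a + 1, 1])).2 = p := by rw [hQPB]; exact hP
    have hlen : (l₁ ++ [a + 1, 1]).length = (l₁ ++ [a]).length + 1 := by simp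
    rcases Nat.even_or_odd (l₁ ++ [a]).length with he | ho
    · have hodd : Odd (l₁ ++ [a + 1, 1]).length := by rw [hlen]; exact he.add_one
      rw [(key _ (by simp) hQB hPB).1 hodd, (key _ (by simp) hQ hP).2 he]
      exact hDvAB.symm
    · have heven : Even (l₁ ++ [a + 1, 1]).length := by rw [hlen]; exact ho.add_one
      rw [(key _ (by simp) hQ hP).1 ho, (key _ (by simp) hQB hPB).2 heven]
      exact hDvAB
  · -- D p q * (D q (-p))⁻¹ = f p q
    have hc : IsCoprime q (-p) := hpq.symm.neg_right
    have h0 : (QP (0 :: l)).1 = -p := by simp [QP, hP]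
    have h0' : (QP (0 :: l)).2 = q := by simpa only [QP] using hQ
    rw [hD p q hpq l hlne hQ hP, hD q (-p) hc (0 :: l) (by simp) h0 h0',
      Dval_cons f 0 hlne, hQ, hP]
    group
end

section
/- Let G₀ be a group, G the group of functions P¹(ℚ) → G₀ with pointwise multiplication and the PSL(2,ℤ)-action (γf)(x) = f(γ⁻¹x). The map sending a reciprocity function f : W → G₀ to the pair (X_f, Y_f), where X_f(q/p) := f(p,q) and Y_f := τX_f (so Y_f(q/p) = f(q, q−p)), is a bijection between the set of G₀-valued reciprocity functions and the set of Dedekind cocycles, i.e. pairs (X,Y) with X·σX=1, Y·τY·τ²Y=1 and Y = τX. -/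
/-- A `G₀`-valued reciprocity function on `W = {(p,q) ∈ ℤ² : gcd(p,q) = 1}`:
`f(p,-q) = f(-p,q)`, `f(p,q)·f(-q,p) = 1`, and `f(p,p+q)·f(p+q,q) = f(p,q)`. -/
structure RecipFun (G₀ : Type*) [Group G₀] where
  toFun : {pq : ℤ × ℤ // IsCoprime pq.1 pq.2} → G₀
  rel1 : ∀ (p q : ℤ) (h : IsCoprime p q),
    toFun ⟨(p, -q), h.neg_right⟩ = toFun ⟨(-p, q), h.neg_left⟩
  rel2 : ∀ (p q : ℤ) (h : IsCoprime p q),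
    toFun ⟨(p, q), h⟩ * toFun ⟨(-q, p), h.symm.neg_left⟩ = 1
  rel3 : ∀ (p q : ℤ) (h : IsCoprime p q),
    toFun ⟨(p, p + q), by simpa [add_comm] using h.add_mul_left_right 1⟩ *
      toFun ⟨(p + q, q), by simpa [add_comm] using (h.symm.add_mul_left_right 1).symm⟩ =
      toFun ⟨(p, q), h⟩

/-- The action of `σ⁻¹ = σ = [[0,-1],[1,0]]` on `P¹(ℚ) = ℚ ∪ {∞}`: `z ↦ -1/z`. -/
def sigmaInvAct : OnePoint ℚ → OnePoint ℚ
  | OnePoint.infty => ((0 : ℚ) : OnePoint ℚ)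
  | Option.some x => if x = 0 then OnePoint.infty else ((-x⁻¹ : ℚ) : OnePoint ℚ)

/-- The action of `τ⁻¹ = [[-1,1],[-1,0]]` on `P¹(ℚ) = ℚ ∪ {∞}`, where
`τ = [[0,-1],[1,-1]]`: `z ↦ (z-1)/z`. -/
def tauInvAct : OnePoint ℚ → OnePoint ℚ
  | OnePoint.infty => ((1 : ℚ) : OnePoint ℚ)
  | Option.some x => if x = 0 then OnePoint.infty else (((x - 1) / x : ℚ) : OnePoint ℚ)

/-- The function `X_f : P¹(ℚ) → G₀` attached to a reciprocity function `f`: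
`X_f(q/p) := f(p,q)` (well defined since `f(-p,-q) = f(p,q)`); the point `∞`
corresponds to `(p,q) = (0,1)`. -/
def Xf {G₀ : Type*} [Group G₀] (f : RecipFun G₀) : OnePoint ℚ → G₀
  | OnePoint.infty => f.toFun ⟨(0, 1), isCoprime_zero_left.mpr isUnit_one⟩
  | Option.some x => f.toFun ⟨((x.den : ℤ), x.num), by
      rw [Int.isCoprime_iff_gcd_eq_one]
      simpa [Int.gcd, Nat.gcd_comm, Nat.Coprime] using x.reduced⟩

/-- A Dedekind cocycle: a pair `(X,Y)` of functions `P¹(ℚ) → G₀` satisfying the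
abstract Shimura–Eichler relations `X·σX = 1`, `Y·τY·τ²Y = 1` (for the action
`(γf)(x) = f(γ⁻¹x)` of `PSL(2,ℤ)`), together with `Y = τX`. -/
def IsDedekindCocycle {G₀ : Type*} [Group G₀]
    (XY : (OnePoint ℚ → G₀) × (OnePoint ℚ → G₀)) : Prop :=
  (∀ x, XY.1 x * XY.1 (sigmaInvAct x) = 1) ∧
  (∀ x, XY.2 x * XY.2 (tauInvAct x) * XY.2 (tauInvAct (tauInvAct x)) = 1) ∧
  (∀ x, XY.2 x = XY.1 (tauInvAct x))

section ManinAux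

variable {G₀ : Type*} [Group G₀]

private lemma rat_cop (x : ℚ) : IsCoprime ((x.den : ℤ)) x.num := by
  rw [Int.isCoprime_iff_gcd_eq_one]
  simpa [Int.gcd, Nat.gcd_comm, Nat.Coprime] using x.reduced

private lemma fc (f : RecipFun G₀) {p q p' q' : ℤ} {h : IsCoprime p q} (h' : IsCoprime p' q')
    (hp : p = p') (hq : q = q') : f.toFun ⟨(p, q), h⟩ = f.toFun ⟨(p', q'), h'⟩ := by
  subst hp; subst hq; rfl

private lemma negneg (f : RecipFun G₀) {p q : ℤ} {h' : IsCoprime (-p) (-q)}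
    (h : IsCoprime p q) : f.toFun ⟨(-p, -q), h'⟩ = f.toFun ⟨(p, q), h⟩ := by
  have e := f.rel1 (-p) q h.neg_left
  rw [fc f h (neg_neg p) rfl] at e
  exact e

/-- Master sign/index fixing lemma. -/
private lemma fsign (f : RecipFun G₀) (p q : ℤ) (h : IsCoprime p q) {p' q' : ℤ}
    {h' : IsCoprime p' q'} (hcase : (p' = p ∧ q' = q) ∨ (p' = -p ∧ q' = -q)) :
    f.toFun ⟨(p', q'), h'⟩ = f.toFun ⟨(p, q), h⟩ := by
  rcases hcase with ⟨hp, hq⟩ | ⟨hp, hq⟩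
  · subst hp; subst hq; rfl
  · subst hp; subst hq; exact negneg f h

private lemma Xf_coe (f : RecipFun G₀) (x : ℚ) :
    Xf f (x : OnePoint ℚ) = f.toFun ⟨((x.den : ℤ), x.num), rat_cop x⟩ := rfl

private lemma Xf_infty (f : RecipFun G₀) (h : IsCoprime (0:ℤ) 1) :
    Xf f OnePoint.infty = f.toFun ⟨(0, 1), h⟩ := rfl

private lemma Xf_eval_pos (f : RecipFun G₀) (p q : ℤ) (hp : 0 < p) (h : IsCoprime p q) :
    Xf f (((q : ℚ) / (p : ℚ)) : OnePoint ℚ) = f.toFun ⟨(p, q), h⟩ := by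
  have hc : Nat.Coprime q.natAbs p.natAbs := by
    rw [Int.isCoprime_iff_gcd_eq_one] at h
    simpa [Int.gcd, Nat.Coprime, Nat.gcd_comm] using h
  rw [Xf_coe]
  exact fc f h (Rat.den_div_eq_of_coprime hp hc) (Rat.num_div_eq_of_coprime hp hc)

private lemma Xf_eval (f : RecipFun G₀) (p q : ℤ) (hp : p ≠ 0) (h : IsCoprime p q) :
    Xf f (((q : ℚ) / (p : ℚ)) : OnePoint ℚ) = f.toFun ⟨(p, q), h⟩ := by
  rcases hp.lt_or_gt with hneg | hpos
  · have e : ((q : ℚ) / (p : ℚ)) = (((-q : ℤ) : ℚ) / ((-p : ℤ) : ℚ)) := by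
      push_cast; rw [neg_div_neg_eq]
    rw [e, Xf_eval_pos f (-p) (-q) (by omega) (h.neg_left.neg_right), negneg f h]
  · exact Xf_eval_pos f p q hpos h

private lemma Xf_zero (f : RecipFun G₀) (h : IsCoprime (1:ℤ) 0) :
    Xf f ((0 : ℚ) : OnePoint ℚ) = f.toFun ⟨(1, 0), h⟩ := by
  rw [Xf_coe]
  exact fc f h (by norm_num) (by norm_num)

private lemma Xf_one (f : RecipFun G₀) (h : IsCoprime (1:ℤ) 1) :
    Xf f ((1 : ℚ) : OnePoint ℚ) = f.toFun ⟨(1, 1), h⟩ := by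
  rw [Xf_coe]
  exact fc f h (by norm_num) (by norm_num)

private lemma sigma_some (x : ℚ) : sigmaInvAct (x : OnePoint ℚ)
    = if x = 0 then OnePoint.infty else ((-x⁻¹ : ℚ) : OnePoint ℚ) := rfl

private lemma tau_some (x : ℚ) : tauInvAct (x : OnePoint ℚ)
    = if x = 0 then OnePoint.infty else (((x - 1) / x : ℚ) : OnePoint ℚ) := rfl

private lemma sigma_coe (a b : ℤ) (ha : a ≠ 0) (hb : b ≠ 0) :
    sigmaInvAct (((a : ℚ) / (b : ℚ)) : OnePoint ℚ)
      = ((((-b : ℤ) : ℚ) / ((a : ℤ) : ℚ)) : OnePoint ℚ) := by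
  have ha' : (a : ℚ) ≠ 0 := Int.cast_ne_zero.2 ha
  have hb' : (b : ℚ) ≠ 0 := Int.cast_ne_zero.2 hb
  rw [sigma_some, if_neg (div_ne_zero ha' hb')]
  exact congrArg (fun r : ℚ => (r : OnePoint ℚ)) (by push_cast; rw [inv_div, neg_div])

private lemma sigma_zero : sigmaInvAct ((0 : ℚ) : OnePoint ℚ) = OnePoint.infty := by
  rw [sigma_some, if_pos rfl]

private lemma sigma_infty : sigmaInvAct OnePoint.infty = ((0 : ℚ) : OnePoint ℚ) := rfl

private lemma tau_coe (a b : ℤ) (ha : a ≠ 0) (hb : b ≠ 0) :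
    tauInvAct (((a : ℚ) / (b : ℚ)) : OnePoint ℚ)
      = ((((a - b : ℤ) : ℚ) / ((a : ℤ) : ℚ)) : OnePoint ℚ) := by
  have ha' : (a : ℚ) ≠ 0 := Int.cast_ne_zero.2 ha
  have hb' : (b : ℚ) ≠ 0 := Int.cast_ne_zero.2 hb
  rw [tau_some, if_neg (div_ne_zero ha' hb')]
  exact congrArg (fun r : ℚ => (r : OnePoint ℚ)) (by push_cast; field_simp)

private lemma tau_zero : tauInvAct ((0 : ℚ) : OnePoint ℚ) = OnePoint.infty := by
  rw [tau_some, if_pos rfl]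

private lemma tau_one : tauInvAct ((1 : ℚ) : OnePoint ℚ) = ((0 : ℚ) : OnePoint ℚ) := by
  rw [tau_some, if_neg one_ne_zero]; norm_num

private lemma tau_infty : tauInvAct OnePoint.infty = ((1 : ℚ) : OnePoint ℚ) := rfl

private lemma tau3 (x : OnePoint ℚ) : tauInvAct (tauInvAct (tauInvAct x)) = x := by
  cases x with
  | infty => rw [tau_infty, tau_one, tau_zero]
  | coe r =>
    by_cases hr0 : r = 0
    · subst hr0; rw [tau_zero, tau_infty, tau_one]
    by_cases hr1 : r = 1
    · subst hr1; rw [tau_one, tau_zero, tau_infty]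
    have hd : (r - 1 : ℚ) ≠ 0 := sub_ne_zero.2 hr1
    have hs : ((r - 1)/r : ℚ) ≠ 0 := div_ne_zero hd hr0
    have e2 : (((r-1)/r - 1) / ((r-1)/r) : ℚ) = ((-1)/(r-1) : ℚ) := by
      rw [div_eq_iff hs]; field_simp; ring
    have ht : ((-1)/(r-1) : ℚ) ≠ 0 := div_ne_zero (by norm_num) hd
    have e3 : (((-1)/(r-1) - 1) / ((-1)/(r-1)) : ℚ) = r := by
      rw [div_eq_iff ht]; field_simp; ring
    rw [tau_some, if_neg hr0, tau_some, if_neg hs, e2, tau_some, if_neg ht, e3]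

/-- Coprimality helpers. -/
private lemma cop1 {p q : ℤ} (h : IsCoprime p q) : IsCoprime q (q - p) := by
  have h2 := (h.symm.neg_right).add_mul_left_right 1
  rwa [mul_one, neg_add_eq_sub] at h2

private lemma cop2 {p q : ℤ} (h : IsCoprime p q) : IsCoprime (p - q) p := by
  have h2 := (h.symm.neg_left).add_mul_left_left 1
  rwa [mul_one, neg_add_eq_sub] at h2

private lemma cop3 {p q : ℤ} (h : IsCoprime p q) : IsCoprime p (q - p) := by
  have h2 := h.add_mul_left_right (-1)
  rwa [mul_neg_one, ← sub_eq_add_neg] at h2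

private lemma cop_ne {q : ℤ} (h : IsCoprime (0:ℤ) q) : q ≠ 0 := by
  rw [Int.isCoprime_iff_gcd_eq_one] at h; simp at h; omega

/-- The triple relation for a reciprocity function. -/
private lemma trip (f : RecipFun G₀) (p q : ℤ) (h : IsCoprime p q)
    (h1 : IsCoprime q (q - p)) (h2 : IsCoprime (p - q) p) :
    f.toFun ⟨(p, q), h⟩ * f.toFun ⟨(q, q - p), h1⟩ * f.toFun ⟨(p - q, p), h2⟩ = 1 := by
  have h3 : IsCoprime p (q - p) := cop3 h
  have e1 := f.rel3 p (q - p) h3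
  rw [fc f (p' := p) (q' := q) h rfl (by ring),
      fc f (p' := q) (q' := q - p) h1 (by ring) rfl] at e1
  have e2 := f.rel2 p (q - p) h3
  rw [fc f (p' := p - q) (q' := p) h2 (by ring) rfl] at e2
  rw [e1]; exact e2

private lemma h01 : IsCoprime (0:ℤ) 1 := isCoprime_zero_left.mpr isUnit_one
private lemma h10 : IsCoprime (1:ℤ) 0 := isCoprime_one_left
private lemma h11 : IsCoprime (1:ℤ) 1 := isCoprime_one_left

/-- The Shimura–Eichler `σ`-relation for `X_f`. -/
private lemma Xrel (f : RecipFun G₀) (x : OnePoint ℚ) :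
    Xf f x * Xf f (sigmaInvAct x) = 1 := by
  cases x with
  | infty =>
    rw [sigma_infty, Xf_infty f h01, Xf_zero f h10]
    have e := f.rel2 0 1 h01
    rwa [fsign f 1 0 h10 (p' := -1) (q' := 0) (by omega)] at e
  | coe r =>
    by_cases hr : r = 0
    · subst hr
      rw [sigma_zero, Xf_zero f h10, Xf_infty f h01]
      have e := f.rel2 1 0 h10
      rwa [fsign f 0 1 h01 (p' := -0) (q' := 1) (by omega)] at e
    · have hq : r.num ≠ 0 := Rat.num_ne_zero.2 hr
      have hp : ((r.den : ℤ)) ≠ 0 := by exact_mod_cast r.den_ne_zero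
      have hr' : ((r.num : ℚ) / ((r.den : ℤ) : ℚ)) = r := by
        rw [Int.cast_natCast, Rat.num_div_den]
      rw [← hr', Xf_eval f _ _ hp (rat_cop r), sigma_coe _ _ hq hp,
        Xf_eval f _ _ hq ((rat_cop r).symm.neg_right)]
      have e := f.rel2 (r.den : ℤ) r.num (rat_cop r)
      rwa [← f.rel1 r.num (r.den : ℤ) (rat_cop r).symm] at e

/-- The triple relation for `X_f`, geometric form. -/
private lemma Trel (f : RecipFun G₀) (x : OnePoint ℚ) :
    Xf f x * Xf f (tauInvAct x) * Xf f (tauInvAct (tauInvAct x)) = 1 := by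
  cases x with
  | infty =>
    rw [tau_infty, tau_one, Xf_infty f h01, Xf_one f h11, Xf_zero f h10]
    have t := trip f 0 1 h01 (cop1 h01) (cop2 h01)
    rwa [fsign f 1 1 h11 (p' := 1) (q' := 1 - 0) (by omega),
      fsign f 1 0 h10 (p' := 0 - 1) (q' := 0) (by omega)] at t
  | coe r =>
    by_cases hr0 : r = 0
    · subst hr0
      rw [tau_zero, tau_infty, Xf_zero f h10, Xf_infty f h01, Xf_one f h11]
      have t := trip f 1 0 h10 (cop1 h10) (cop2 h10)
      rwa [fsign f 0 1 h01 (p' := 0) (q' := 0 - 1) (by omega),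
        fsign f 1 1 h11 (p' := 1 - 0) (q' := 1) (by omega)] at t
    by_cases hr1 : r = 1
    · subst hr1
      rw [tau_one, tau_zero, Xf_one f h11, Xf_zero f h10, Xf_infty f h01]
      have t := trip f 1 1 h11 (cop1 h11) (cop2 h11)
      rwa [fsign f 1 0 h10 (p' := 1) (q' := 1 - 1) (by omega),
        fsign f 0 1 h01 (p' := 1 - 1) (q' := 1) (by omega)] at t
    · have hq : r.num ≠ 0 := Rat.num_ne_zero.2 hr0
      have hp : ((r.den : ℤ)) ≠ 0 := by exact_mod_cast r.den_ne_zero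
      set p : ℤ := (r.den : ℤ) with hpdef
      set q : ℤ := r.num with hqdef
      have h : IsCoprime p q := rat_cop r
      have hqp : q - p ≠ 0 := by
        intro e
        apply hr1
        have hqp' : q = p := by omega
        rw [← Rat.num_div_den r, ← hqdef, hqp', hpdef]
        push_cast
        rw [div_self (by exact_mod_cast r.den_ne_zero)]
      have hr' : ((q : ℚ) / (p : ℚ)) = r := by
        rw [hqdef, hpdef, Int.cast_natCast, Rat.num_div_den]
      have hcop1 : IsCoprime q (q - p) := cop1 h
      have hcop2' : IsCoprime (q - p) (q - p - q) := by
        have h2 := (cop2 h).neg_left.neg_right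
        rwa [show -(p - q) = q - p by ring, show -p = q - p - q by ring] at h2
      rw [← hr', Xf_eval f p q hp h, tau_coe q p hq hp, Xf_eval f q (q - p) hq hcop1,
        tau_coe (q - p) q hqp hq, Xf_eval f (q - p) (q - p - q) hqp hcop2',
        fsign f (p - q) p (cop2 h) (p' := q - p) (q' := q - p - q) (by omega)]
      exact trip f p q h (cop1 h) (cop2 h)

/-- The raw function underlying the inverse construction. -/
private def mkFun (X : OnePoint ℚ → G₀) : {pq : ℤ × ℤ // IsCoprime pq.1 pq.2} → G₀ :=
  fun pq => if pq.1.1 = 0 then X OnePoint.infty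
    else X (((pq.1.2 : ℚ) / (pq.1.1 : ℚ)) : OnePoint ℚ)

private lemma mkFun_eval (X : OnePoint ℚ → G₀) (p q : ℤ) (h : IsCoprime p q) :
    mkFun X ⟨(p, q), h⟩ = if p = 0 then X OnePoint.infty
      else X (((q : ℚ) / (p : ℚ)) : OnePoint ℚ) := rfl

private lemma opc {a b : ℚ} (h : a = b) : ((a : OnePoint ℚ)) = ((b : OnePoint ℚ)) :=
  congrArg (fun r : ℚ => (r : OnePoint ℚ)) h

private lemma mc (X : OnePoint ℚ → G₀) {p q p' q' : ℤ} {h : IsCoprime p q}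
    (h' : IsCoprime p' q') (hp : p = p') (hq : q = q') :
    mkFun X ⟨(p, q), h⟩ = mkFun X ⟨(p', q'), h'⟩ := by
  subst hp; subst hq; rfl

private lemma mk_rel1 (X : OnePoint ℚ → G₀) : ∀ (p q : ℤ) (h : IsCoprime p q),
    mkFun X ⟨(p, -q), h.neg_right⟩ = mkFun X ⟨(-p, q), h.neg_left⟩ := by
  intro p q h
  rw [mkFun_eval, mkFun_eval]
  by_cases hp : p = 0
  · simp [hp]
  · rw [if_neg hp, if_neg (neg_ne_zero.2 hp)]
    exact congrArg X (opc (by push_cast; rw [div_neg, neg_div]))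

private lemma mk_rel2 (X : OnePoint ℚ → G₀) (hC1 : ∀ x, X x * X (sigmaInvAct x) = 1) :
    ∀ (p q : ℤ) (h : IsCoprime p q),
    mkFun X ⟨(p, q), h⟩ * mkFun X ⟨(-q, p), h.symm.neg_left⟩ = 1 := by
  intro p q h
  rw [mkFun_eval, mkFun_eval]
  by_cases hp : p = 0
  · subst hp
    have hq : q ≠ 0 := cop_ne h
    rw [if_pos rfl, if_neg (neg_ne_zero.2 hq),
      show ((((0:ℤ) : ℚ) / ((-q : ℤ) : ℚ)) : OnePoint ℚ) = ((0:ℚ) : OnePoint ℚ) from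
        opc (by push_cast; simp), ← sigma_infty]
    exact hC1 OnePoint.infty
  · by_cases hq : q = 0
    · subst hq
      rw [if_neg hp, if_pos neg_zero,
        show ((((0:ℤ) : ℚ) / ((p : ℤ) : ℚ)) : OnePoint ℚ) = ((0:ℚ) : OnePoint ℚ) from
          opc (by push_cast; simp), ← sigma_zero]
      exact hC1 ((0:ℚ) : OnePoint ℚ)
    · rw [if_neg hp, if_neg (neg_ne_zero.2 hq),
        show ((((p:ℤ) : ℚ) / ((-q : ℤ) : ℚ)) : OnePoint ℚ)
            = ((((-p : ℤ) : ℚ) / ((q : ℤ) : ℚ)) : OnePoint ℚ) from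
          opc (by push_cast; rw [div_neg, neg_div]), ← sigma_coe q p hq hp]
      exact hC1 (((q : ℚ) / (p : ℚ)) : OnePoint ℚ)

private lemma trelX_of (X Y : OnePoint ℚ → G₀)
    (hC2 : ∀ x, Y x * Y (tauInvAct x) * Y (tauInvAct (tauInvAct x)) = 1)
    (hC3 : ∀ x, Y x = X (tauInvAct x)) :
    ∀ x, X x * X (tauInvAct x) * X (tauInvAct (tauInvAct x)) = 1 := by
  intro x
  have h2 := hC2 x
  simp only [hC3] at h2
  rw [tau3 x] at h2
  have h3 : X (tauInvAct x) * X (tauInvAct (tauInvAct x)) = (X x)⁻¹ :=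
    eq_inv_of_mul_eq_one_left h2
  rw [mul_assoc, h3]
  group

private lemma mk_trip (X : OnePoint ℚ → G₀)
    (trelX : ∀ x, X x * X (tauInvAct x) * X (tauInvAct (tauInvAct x)) = 1)
    (p q : ℤ) (h : IsCoprime p q) (h1 : IsCoprime q (q - p)) (h2 : IsCoprime (p - q) p) :
    mkFun X ⟨(p, q), h⟩ * mkFun X ⟨(q, q - p), h1⟩ * mkFun X ⟨(p - q, p), h2⟩ = 1 := by
  rw [mkFun_eval, mkFun_eval, mkFun_eval]
  by_cases hp : p = 0
  · subst hp
    have hq : q ≠ 0 := cop_ne h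
    rw [if_pos rfl, if_neg hq, if_neg (show (0:ℤ) - q ≠ 0 by omega),
      show ((((q - 0 : ℤ) : ℚ) / ((q : ℤ) : ℚ)) : OnePoint ℚ) = ((1:ℚ) : OnePoint ℚ) from
        opc (by push_cast; rw [sub_zero, div_self (Int.cast_ne_zero.2 hq)]),
      show ((((0 : ℤ) : ℚ) / ((0 - q : ℤ) : ℚ)) : OnePoint ℚ) = ((0:ℚ) : OnePoint ℚ) from
        opc (by push_cast; simp)]
    have t := trelX OnePoint.infty
    rwa [tau_infty, tau_one] at t
  by_cases hq : q = 0
  · subst hq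
    rw [if_neg hp, if_pos rfl, if_neg (show p - (0:ℤ) ≠ 0 by omega),
      show ((((0 : ℤ) : ℚ) / ((p : ℤ) : ℚ)) : OnePoint ℚ) = ((0:ℚ) : OnePoint ℚ) from
        opc (by push_cast; simp),
      show ((((p : ℤ) : ℚ) / ((p - 0 : ℤ) : ℚ)) : OnePoint ℚ) = ((1:ℚ) : OnePoint ℚ) from
        opc (by push_cast; rw [sub_zero, div_self (Int.cast_ne_zero.2 hp)])]
    have t := trelX ((0:ℚ) : OnePoint ℚ)
    rwa [tau_zero, tau_infty] at t
  by_cases hpq : p = q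
  · subst hpq
    rw [if_neg hp, if_neg hp, if_pos (sub_self p),
      show ((((p : ℤ) : ℚ) / ((p : ℤ) : ℚ)) : OnePoint ℚ) = ((1:ℚ) : OnePoint ℚ) from
        opc (div_self (Int.cast_ne_zero.2 hp)),
      show ((((p - p : ℤ) : ℚ) / ((p : ℤ) : ℚ)) : OnePoint ℚ) = ((0:ℚ) : OnePoint ℚ) from
        opc (by push_cast; simp)]
    have t := trelX ((1:ℚ) : OnePoint ℚ)
    rwa [tau_one, tau_zero] at t
  · have hqp : q - p ≠ 0 := by omega
    have hpq' : p - q ≠ 0 := by omega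
    rw [if_neg hp, if_neg hq, if_neg hpq']
    have t := trelX (((q : ℚ) / (p : ℚ)) : OnePoint ℚ)
    rw [tau_coe q p hq hp, tau_coe (q - p) q hqp hq,
      show ((((q - p - q : ℤ) : ℚ) / ((q - p : ℤ) : ℚ)) : OnePoint ℚ)
          = ((((p : ℤ) : ℚ) / ((p - q : ℤ) : ℚ)) : OnePoint ℚ) from
        opc (by
          push_cast
          rw [div_eq_div_iff (sub_ne_zero.2 (by exact_mod_cast (fun e => hpq e.symm : ¬ (q:ℤ) = p)))
            (sub_ne_zero.2 (by exact_mod_cast hpq))]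
          ring)] at t
    exact t

private lemma mk_rel3 (X : OnePoint ℚ → G₀) (hC1 : ∀ x, X x * X (sigmaInvAct x) = 1)
    (trelX : ∀ x, X x * X (tauInvAct x) * X (tauInvAct (tauInvAct x)) = 1) :
    ∀ (p q : ℤ) (h : IsCoprime p q),
    mkFun X ⟨(p, p + q), by simpa [add_comm] using h.add_mul_left_right 1⟩ *
      mkFun X ⟨(p + q, q), by simpa [add_comm] using (h.symm.add_mul_left_right 1).symm⟩ =
      mkFun X ⟨(p, q), h⟩ := by
  intro p q h
  have hA : IsCoprime p (p + q) := by simpa [add_comm] using h.add_mul_left_right 1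
  have hB : IsCoprime (p + q) q := by simpa [add_comm] using (h.symm.add_mul_left_right 1).symm
  have t := mk_trip X trelX p (p + q) hA (cop1 hA) (cop2 hA)
  rw [mc X (p' := p + q) (q' := q) hB rfl (by ring),
    mc X (p' := -q) (q' := p) h.symm.neg_left (by ring) rfl] at t
  have e2 := mk_rel2 X hC1 p q h
  exact (eq_inv_of_mul_eq_one_left t).trans (eq_inv_of_mul_eq_one_left e2).symm
end ManinAux

/-- Manin's Theorem 3.6: `f ↦ (X_f, Y_f)` with `Y_f = τX_f` is a bijection between
`G₀`-valued reciprocity functions and Dedekind cocycles. -/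
theorem recipFun_equiv_dedekindCocycle {G₀ : Type*} [Group G₀] :
    Function.Injective
      (fun f : RecipFun G₀ => (Xf f, fun x => Xf f (tauInvAct x))) ∧
    Set.range (fun f : RecipFun G₀ => (Xf f, fun x => Xf f (tauInvAct x))) =
      {XY : (OnePoint ℚ → G₀) × (OnePoint ℚ → G₀) | IsDedekindCocycle XY} := by
  constructor
  · intro f g hfg
    have h1 : Xf f = Xf g := congrArg Prod.fst hfg
    have hext : f.toFun = g.toFun := by
      funext pq
      obtain ⟨⟨p, q⟩, h⟩ := pq
      by_cases hp : p = 0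
      · subst hp
        have hq1 : q.natAbs = 1 := by
          rw [Int.isCoprime_iff_gcd_eq_one] at h; simpa using h
        have e := congrFun h1 OnePoint.infty
        rw [Xf_infty f h01, Xf_infty g h01] at e
        rcases (by omega : q = 1 ∨ q = -1) with rfl | rfl
        · exact e
        · rw [fsign f 0 1 h01 (p' := 0) (q' := -1) (by omega),
            fsign g 0 1 h01 (p' := 0) (q' := -1) (by omega)]
          exact e
      · have e := congrFun h1 (((q : ℚ) / (p : ℚ)) : OnePoint ℚ)
        rwa [Xf_eval f p q hp h, Xf_eval g p q hp h] at e
    cases f; cases g; cases hext; rfl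
  · ext XY
    simp only [Set.mem_range, Set.mem_setOf_eq]
    constructor
    · rintro ⟨f, rfl⟩
      exact ⟨Xrel f, fun x => Trel f (tauInvAct x), fun x => rfl⟩
    · obtain ⟨X, Y⟩ := XY
      rintro ⟨hC1, hC2, hC3⟩
      have trelX := trelX_of X Y hC2 hC3
      refine ⟨⟨mkFun X, mk_rel1 X, mk_rel2 X hC1, mk_rel3 X hC1 trelX⟩, ?_⟩
      have hXf :
          Xf (⟨mkFun X, mk_rel1 X, mk_rel2 X hC1, mk_rel3 X hC1 trelX⟩ : RecipFun G₀) = X := by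
        funext x
        cases x with
        | infty =>
          show mkFun X ⟨((0:ℤ), (1:ℤ)), isCoprime_zero_left.mpr isUnit_one⟩ = X OnePoint.infty
          rw [mkFun_eval, if_pos rfl]
        | coe r =>
          show mkFun X ⟨((r.den : ℤ), r.num), rat_cop r⟩ = X (r : OnePoint ℚ)
          have hden : ((r.den : ℤ)) ≠ 0 := by exact_mod_cast r.den_ne_zero
          rw [mkFun_eval, if_neg hden]
          exact congrArg X (opc (by rw [Int.cast_natCast, Rat.num_div_den]))
      rw [hXf, show (fun x => X (tauInvAct x)) = Y from funext fun x => (hC3 x).symm]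
end
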